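/- There exists a constant c₁ ∈ (0,1], depending only on α and d, such that for all x, y ∈ ℤ^d with x ≠ y and every L¹-geodesic z_0, …, z_m from x to y one has c₁ · ρ_x(|x−y|) ≤ Σ_{i=0}^{m−1} μ_{z_i z_{i+1}}^{−1} ≤ c₁^{−1} · ρ_x(|x−y|). -/

import Mathlib

open scoped BigOperators

/-- ℓ∞ norm on ℤ^d, as a natural number. -/
def linf {d : ℕ} (x : Fin d → ℤ) : ℕ :=
  Finset.univ.sup fun i => (x i).natAbs

/-- ℓ¹ norm on ℤ^d, as a natural number. -/
def l1 {d : ℕ} (x : Fin d → ℤ) : ℕ :=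
  ∑ i, (x i).natAbs

/-- `ν x = (max(|x|,1))^α`. -/
noncomputable def nu (α : ℝ) {d : ℕ} (x : Fin d → ℤ) : ℝ :=
  ((max (linf x) 1 : ℕ) : ℝ) ^ α

/-- The conductance `μ x y = (max(|x|,|y|))^(-α)` if `|x-y|₁ = 1`, and `0` otherwise. -/
noncomputable def mu (α : ℝ) {d : ℕ} (x y : Fin d → ℤ) : ℝ :=
  if l1 (x - y) = 1 then ((max (linf x) (linf y) : ℕ) : ℝ) ^ (-α) else 0

/-- `z 0, …, z m` is a path: consecutive points are at ℓ¹-distance one. -/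
def IsPath {d : ℕ} (z : ℕ → Fin d → ℤ) (m : ℕ) : Prop :=
  ∀ i < m, l1 (z (i + 1) - z i) = 1

/-- The metric `ρ(x,y)`: `0` if `x = y`, otherwise the infimum of `∑ ν (z i)` over
paths from `x` to `y`. -/
noncomputable def rho (α : ℝ) {d : ℕ} (x y : Fin d → ℤ) : ℝ :=
  if x = y then 0
  else sInf {S : ℝ | ∃ (m : ℕ) (z : ℕ → Fin d → ℤ), IsPath z m ∧ z 0 = x ∧ z m = y ∧
    S = ∑ i ∈ Finset.range (m + 1), nu α (z i)}

/-- `ρ_x(r) = (max(|x|,r))^α · r`. -/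
noncomputable def rhox (α : ℝ) {d : ℕ} (x : Fin d → ℤ) (r : ℝ) : ℝ :=
  (max ((linf x : ℕ) : ℝ) r) ^ α * r

/-- `ρ_x⁻¹(r) = (max(|x|, r^{1/(1+α)}))^{-α} · r`, the inverse function of `ρ_x`. -/
noncomputable def rhoxInv (α : ℝ) {d : ℕ} (x : Fin d → ℤ) (r : ℝ) : ℝ :=
  (max ((linf x : ℕ) : ℝ) (r ^ (1 / (1 + α)))) ^ (-α) * r

/-- `V(x,r) = ν(B(x,r))`, the ν-volume of the ℓ∞-ball of radius `r` about `x`. -/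
noncomputable def V (α : ℝ) {d : ℕ} (x : Fin d → ℤ) (r : ℝ) : ℝ :=
  ∑' y : {y : Fin d → ℤ // ((linf (y - x) : ℕ) : ℝ) ≤ r}, nu α y.1

/-- `V_ρ(x,r) = ν(B_ρ(x,r))`, the ν-volume of the ρ-ball of radius `r` about `x`. -/
noncomputable def Vrho (α : ℝ) {d : ℕ} (x : Fin d → ℤ) (r : ℝ) : ℝ :=
  ∑' y : {y : Fin d → ℤ // rho α x y ≤ r}, nu α y.1

/-!
Write `K i = max(|z_i|, |z_{i+1}|)`, so that the sum is `∑ K i ^ α`, and let `n = |x - y|`,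
`M = max(|x|, n)`. Since `n ≤ m ≤ d n` and `|z_i| ≤ |x| + i`, every `K i` lies between `1` and
`(d + 1) M`, which gives one of the two bounds for either sign of `α`. The other bound needs the
`K i` to be large on many edges. For `α ≥ 0` and, say, `|y| ≤ |x|`, the first `min(m, |x| / 2)`
edges have `K i ≥ |x| / 2 ≥ M / 4`. For `α < 0`, either `|x| ≥ 2 m` and all `K i ≥ |x| / 2`, or
`M ≤ 2 m`; then, a geodesic being an `ℓ¹`-isometry, `|i - i₀| ≤ 2 d K i` for the point `z_{i₀}` of
least norm on it, and `∑_{k < m} (k + 1) ^ α ≤ m ^ (1 + α) / (1 + α)` finishes.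
-/

open Finset

section Norms

variable {d : ℕ}

theorem natAbs_le_linf (v : Fin d → ℤ) (i : Fin d) : (v i).natAbs ≤ linf v :=
  le_sup (f := fun i => (v i).natAbs) (mem_univ i)

theorem linf_le_iff {v : Fin d → ℤ} {n : ℕ} : linf v ≤ n ↔ ∀ i, (v i).natAbs ≤ n := by
  simp [linf]

theorem linf_le_l1 (v : Fin d → ℤ) : linf v ≤ l1 v :=
  linf_le_iff.2 fun i =>
    single_le_sum (f := fun i => (v i).natAbs) (fun _ _ => Nat.zero_le _) (mem_univ i)

theorem l1_le_mul_linf (v : Fin d → ℤ) : l1 v ≤ d * linf v := by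
  simpa [l1] using sum_le_card_nsmul univ (fun i => (v i).natAbs) _
    fun i _ => natAbs_le_linf v i

theorem linf_add_le (a b : Fin d → ℤ) : linf (a + b) ≤ linf a + linf b :=
  linf_le_iff.2 fun i =>
    (Int.natAbs_add_le _ _).trans (add_le_add (natAbs_le_linf a i) (natAbs_le_linf b i))

theorem l1_add_le (a b : Fin d → ℤ) : l1 (a + b) ≤ l1 a + l1 b := by
  rw [l1, l1, l1, ← sum_add_distrib]
  exact sum_le_sum fun i _ => Int.natAbs_add_le _ _

@[simp]
theorem linf_neg (v : Fin d → ℤ) : linf (-v) = linf v := by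
  simp [linf]

@[simp]
theorem l1_neg (v : Fin d → ℤ) : l1 (-v) = l1 v := by
  simp [l1]

@[simp]
theorem l1_zero : l1 (0 : Fin d → ℤ) = 0 := by
  simp [l1]

theorem linf_sub_comm (a b : Fin d → ℤ) : linf (a - b) = linf (b - a) := by
  rw [← neg_sub, linf_neg]

theorem l1_sub_comm (a b : Fin d → ℤ) : l1 (a - b) = l1 (b - a) := by
  rw [← neg_sub, l1_neg]

theorem linf_sub_le (a b : Fin d → ℤ) : linf (a - b) ≤ linf a + linf b := by
  simpa [sub_eq_add_neg] using linf_add_le a (-b)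

theorem l1_sub_le (a b : Fin d → ℤ) : l1 (a - b) ≤ l1 a + l1 b := by
  simpa [sub_eq_add_neg] using l1_add_le a (-b)

theorem l1_sub_le_add (a b c : Fin d → ℤ) : l1 (a - c) ≤ l1 (a - b) + l1 (b - c) := by
  simpa using l1_add_le (a - b) (b - c)

theorem linf_le_linf_add_l1 (a b : Fin d → ℤ) : linf a ≤ linf b + l1 (a - b) := by
  simpa using (linf_add_le b (a - b)).trans (Nat.add_le_add_left (linf_le_l1 _) _)

theorem linf_pos {v : Fin d → ℤ} (hv : v ≠ 0) : 0 < linf v := by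
  obtain ⟨i, hi⟩ := Function.ne_iff.1 hv
  exact (Int.natAbs_pos.2 hi).trans_le (natAbs_le_linf v i)

end Norms

theorem rhox_nonneg (α : ℝ) {d : ℕ} (x : Fin d → ℤ) {r : ℝ} (hr : 0 ≤ r) : 0 ≤ rhox α x r := by
  unfold rhox
  positivity

/-- Concavity of `t ↦ t ^ p`, via Bernoulli's inequality. -/
theorem mul_rpow_sub_one_le_rpow_sub_rpow {p a : ℝ} (hp0 : 0 ≤ p) (hp1 : p ≤ 1) (ha : 0 ≤ a) :
    p * (a + 1) ^ (p - 1) ≤ (a + 1) ^ p - a ^ p := by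
  have hb : 0 < a + 1 := by linarith
  have hbp : 0 < (a + 1) ^ p := Real.rpow_pos_of_pos hb p
  have bernoulli := rpow_one_add_le_one_add_mul_self
    (neg_le_neg (inv_le_one_of_one_le₀ (by linarith : (1 : ℝ) ≤ a + 1))) hp0 hp1
  rw [show 1 + -(a + 1)⁻¹ = a / (a + 1) by field_simp; ring, Real.div_rpow ha hb.le,
    div_le_iff₀ hbp] at bernoulli
  rw [Real.rpow_sub_one hb.ne']
  calc p * ((a + 1) ^ p / (a + 1)) = (a + 1) ^ p - (1 + p * -(a + 1)⁻¹) * (a + 1) ^ p := by ring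
    _ ≤ (a + 1) ^ p - a ^ p := by linarith

theorem sum_range_rpow_succ_le {α : ℝ} (hα : -1 < α) (hα0 : α ≤ 0) (L : ℕ) :
    ∑ k ∈ range L, ((k : ℝ) + 1) ^ α ≤ (L : ℝ) ^ (1 + α) / (1 + α) := by
  have hp : 0 < 1 + α := by linarith
  induction L with
  | zero => simp [Real.zero_rpow hp.ne']
  | succ L ih =>
    have hstep := mul_rpow_sub_one_le_rpow_sub_rpow hp.le (by linarith) (Nat.cast_nonneg L)
    rw [add_sub_cancel_left] at hstep
    have h : ((L : ℝ) + 1) ^ α ≤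
        ((L : ℝ) + 1) ^ (1 + α) / (1 + α) - (L : ℝ) ^ (1 + α) / (1 + α) := by
      rw [← sub_div, le_div_iff₀ hp]
      linarith
    rw [sum_range_succ, Nat.cast_succ]
    linarith

theorem sum_range_dist_le {f : ℕ → ℝ} (hf : Antitone f) (hf0 : ∀ k, 0 ≤ f k) {i₀ m : ℕ}
    (hi₀ : i₀ ≤ m) : ∑ i ∈ range m, f (Nat.dist i i₀) ≤ 2 * ∑ k ∈ range m, f k := by
  obtain ⟨l, rfl⟩ := Nat.exists_eq_add_of_le hi₀
  have hsub {L : ℕ} (hL : L ≤ i₀ + l) : ∑ k ∈ range L, f k ≤ ∑ k ∈ range (i₀ + l), f k :=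
    sum_le_sum_of_subset_of_nonneg (range_mono hL) fun k _ _ => hf0 k
  have hleft : ∑ i ∈ range i₀, f (Nat.dist i i₀) ≤ ∑ k ∈ range i₀, f k := by
    rw [← sum_range_reflect]
    refine sum_le_sum fun j hj => hf ?_
    rw [mem_range] at hj
    rw [Nat.dist_eq_sub_of_le (by omega)]
    omega
  have hright : ∑ k ∈ range l, f (Nat.dist (i₀ + k) i₀) = ∑ k ∈ range l, f k := by
    refine sum_congr rfl fun k _ => ?_
    rw [Nat.dist_eq_sub_of_le_right (by omega), Nat.add_sub_cancel_left]
  rw [sum_range_add, hright]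
  linarith [hsub (L := i₀) (by omega), hsub (L := l) (by omega)]

def stepNorm {d : ℕ} (z : ℕ → Fin d → ℤ) (i : ℕ) : ℕ :=
  max (linf (z i)) (linf (z (i + 1)))

namespace IsPath

variable {d m : ℕ} {z : ℕ → Fin d → ℤ} {α : ℝ}

theorem reverse (hz : IsPath z m) : IsPath (fun i => z (m - i)) m := by
  intro i hi
  have h := hz (m - (i + 1)) (by omega)
  rwa [show m - (i + 1) + 1 = m - i by omega, l1_sub_comm] at h

theorem l1_sub_le_sub (hz : IsPath z m) {j k : ℕ} (hjk : j ≤ k) (hk : k ≤ m) :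
    l1 (z k - z j) ≤ k - j := by
  induction k, hjk using Nat.le_induction with
  | base => simp
  | succ k hjk ih =>
    have hstep := hz k (by omega)
    have := l1_sub_le_add (z (k + 1)) (z k) (z j)
    have := ih (by omega)
    omega

theorem l1_sub_le_length (hz : IsPath z m) : l1 (z 0 - z m) ≤ m := by
  simpa [l1_sub_comm] using hz.l1_sub_le_sub (Nat.zero_le m) le_rfl

theorem l1_sub_eq_dist (hz : IsPath z m) (hgeo : l1 (z 0 - z m) = m) {i j : ℕ} (hi : i ≤ m)
    (hj : j ≤ m) : l1 (z i - z j) = Nat.dist i j := by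
  wlog hji : j ≤ i generalizing i j
  · rw [l1_sub_comm, Nat.dist_comm]
    exact this hj hi (by omega)
  rw [Nat.dist_eq_sub_of_le_right hji]
  have h1 := hz.l1_sub_le_sub (Nat.zero_le j) hj
  have h2 := hz.l1_sub_le_sub hji hi
  have h3 := hz.l1_sub_le_sub hi le_rfl
  have h4 := (l1_sub_le_add (z 0) (z j) (z m)).trans
    (Nat.add_le_add_left (l1_sub_le_add (z j) (z i) (z m)) _)
  rw [l1_sub_comm] at h1 h2 h3 ⊢
  omega

theorem one_le_stepNorm (hz : IsPath z m) {i : ℕ} (hi : i < m) : 1 ≤ stepNorm z i := by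
  rcases eq_or_ne (z i) 0 with h0 | h0
  · have h1 : z (i + 1) ≠ 0 := by
      intro h1
      simpa [h0, h1] using hz i hi
    exact (linf_pos h1).trans_le (le_max_right _ _)
  · exact (linf_pos h0).trans_le (le_max_left _ _)

theorem inv_mu_eq (hz : IsPath z m) (α : ℝ) {i : ℕ} (hi : i < m) :
    (mu α (z i) (z (i + 1)))⁻¹ = (stepNorm z i : ℝ) ^ α := by
  rw [mu, if_pos (by rw [l1_sub_comm]; exact hz i hi), Real.rpow_neg (Nat.cast_nonneg _),
    inv_inv, stepNorm]

theorem stepNorm_le (hz : IsPath z m) {i : ℕ} (hi : i < m) : stepNorm z i ≤ linf (z 0) + m := by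
  have h1 := linf_le_linf_add_l1 (z i) (z 0)
  have h2 := linf_le_linf_add_l1 (z (i + 1)) (z 0)
  have h3 := hz.l1_sub_le_sub (Nat.zero_le i) hi.le
  have h4 := hz.l1_sub_le_sub (Nat.zero_le (i + 1)) hi
  unfold stepNorm
  omega

theorem linf_le_stepNorm_add (hz : IsPath z m) {i : ℕ} (hi : i < m) :
    linf (z 0) ≤ stepNorm z i + i := by
  have h1 := linf_le_linf_add_l1 (z 0) (z i)
  have h2 := hz.l1_sub_le_sub (Nat.zero_le i) hi.le
  rw [l1_sub_comm] at h2
  have : linf (z i) ≤ stepNorm z i := le_max_left _ _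
  omega

theorem stepNorm_le_mul (hz : IsPath z m) (hgeo : l1 (z 0 - z m) = m) {i : ℕ} (hi : i < m) :
    (stepNorm z i : ℝ) ≤ (d + 1) * max (linf (z 0) : ℝ) (linf (z 0 - z m)) := by
  have hmd : m ≤ d * linf (z 0 - z m) := hgeo.ge.trans (l1_le_mul_linf _)
  have hK : (stepNorm z i : ℝ) ≤ linf (z 0) + d * linf (z 0 - z m) := by
    exact_mod_cast (hz.stepNorm_le hi).trans (Nat.add_le_add_left hmd _)
  have hx := le_max_left (linf (z 0) : ℝ) (linf (z 0 - z m))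
  have hn := mul_le_mul_of_nonneg_left (le_max_right (linf (z 0) : ℝ) (linf (z 0 - z m)))
    (Nat.cast_nonneg d)
  linarith

theorem sum_rpow_stepNorm_le_of_nonneg (hz : IsPath z m) (hgeo : l1 (z 0 - z m) = m)
    (hα : 0 ≤ α) :
    ∑ i ∈ range m, (stepNorm z i : ℝ) ^ α ≤ d * (d + 1) ^ α * rhox α (z 0) (linf (z 0 - z m)) := by
  have hmd : (m : ℝ) ≤ d * linf (z 0 - z m) := by exact_mod_cast hgeo.ge.trans (l1_le_mul_linf _)
  calc ∑ i ∈ range m, (stepNorm z i : ℝ) ^ α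
      ≤ ∑ i ∈ range m, ((d + 1) * max (linf (z 0) : ℝ) (linf (z 0 - z m))) ^ α :=
        sum_le_sum fun i hi =>
          Real.rpow_le_rpow (Nat.cast_nonneg _) (hz.stepNorm_le_mul hgeo (mem_range.1 hi)) hα
    _ = m * ((d + 1) ^ α * max (linf (z 0) : ℝ) (linf (z 0 - z m)) ^ α) := by
        rw [sum_const, card_range, nsmul_eq_mul, Real.mul_rpow (by positivity) (by positivity)]
    _ ≤ (d * linf (z 0 - z m)) * ((d + 1) ^ α * max (linf (z 0) : ℝ) (linf (z 0 - z m)) ^ α) := by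
        gcongr
    _ = _ := by rw [rhox]; ring

theorem le_sum_rpow_stepNorm_of_nonpos (hz : IsPath z m) (hgeo : l1 (z 0 - z m) = m)
    (hα : α ≤ 0) :
    (d + 1) ^ α * rhox α (z 0) (linf (z 0 - z m)) ≤ ∑ i ∈ range m, (stepNorm z i : ℝ) ^ α := by
  have hnm : (linf (z 0 - z m) : ℝ) ≤ m := by exact_mod_cast (linf_le_l1 _).trans hgeo.le
  calc (d + 1) ^ α * rhox α (z 0) (linf (z 0 - z m))
      = linf (z 0 - z m) * ((d + 1) ^ α * max (linf (z 0) : ℝ) (linf (z 0 - z m)) ^ α) := by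
        rw [rhox]; ring
    _ ≤ m * ((d + 1) ^ α * max (linf (z 0) : ℝ) (linf (z 0 - z m)) ^ α) := by gcongr
    _ = ∑ i ∈ range m, ((d + 1) * max (linf (z 0) : ℝ) (linf (z 0 - z m))) ^ α := by
        rw [sum_const, card_range, nsmul_eq_mul, Real.mul_rpow (by positivity) (by positivity)]
    _ ≤ ∑ i ∈ range m, (stepNorm z i : ℝ) ^ α :=
        sum_le_sum fun i hi => Real.rpow_le_rpow_of_nonpos
          (by exact_mod_cast hz.one_le_stepNorm (mem_range.1 hi))
          (hz.stepNorm_le_mul hgeo (mem_range.1 hi)) hα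


theorem sum_stepNorm_reverse (f : ℕ → ℝ) (z : ℕ → Fin d → ℤ) (m : ℕ) :
    ∑ i ∈ range m, f (stepNorm (fun j => z (m - j)) i) = ∑ i ∈ range m, f (stepNorm z i) := by
  rw [← sum_range_reflect]
  refine sum_congr rfl fun i hi => ?_
  rw [mem_range] at hi
  rw [stepNorm, stepNorm, max_comm, show m - (m - 1 - i) = i + 1 by omega,
    show m - (m - 1 - i + 1) = i by omega]

theorem le_sum_rpow_stepNorm_of_linf_le (hz : IsPath z m) (hα : 0 ≤ α)
    (hyx : linf (z m) ≤ linf (z 0)) :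
    (linf (z 0 - z m) / 4 : ℝ) * (linf (z 0) / 2 : ℝ) ^ α ≤
      ∑ i ∈ range m, (stepNorm z i : ℝ) ^ α := by
  set s := min m (linf (z 0) / 2 + 1)
  have hns : linf (z 0 - z m) ≤ 4 * s := by
    have := linf_sub_le (z 0) (z m)
    have := (linf_le_l1 (z 0 - z m)).trans hz.l1_sub_le_length
    omega
  calc (linf (z 0 - z m) / 4 : ℝ) * (linf (z 0) / 2 : ℝ) ^ α
      ≤ s * (linf (z 0) / 2 : ℝ) ^ α := by
        gcongr
        rw [div_le_iff₀ four_pos]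
        exact_mod_cast (by omega : linf (z 0 - z m) ≤ s * 4)
    _ = ∑ i ∈ range s, (linf (z 0) / 2 : ℝ) ^ α := by simp
    _ ≤ ∑ i ∈ range s, (stepNorm z i : ℝ) ^ α := by
        refine sum_le_sum fun i hi => Real.rpow_le_rpow (by positivity) ?_ hα
        rw [mem_range] at hi
        have := hz.linf_le_stepNorm_add (i := i) (by omega)
        rw [div_le_iff₀ two_pos]
        exact_mod_cast (by omega : linf (z 0) ≤ stepNorm z i * 2)
    _ ≤ ∑ i ∈ range m, (stepNorm z i : ℝ) ^ α :=
        sum_le_sum_of_subset_of_nonneg (range_mono (min_le_left _ _)) fun _ _ _ => by positivity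

theorem le_sum_rpow_stepNorm_of_nonneg (hz : IsPath z m) (hα : 0 ≤ α) :
    (4 ^ (1 + α))⁻¹ * rhox α (z 0) (linf (z 0 - z m)) ≤ ∑ i ∈ range m, (stepNorm z i : ℝ) ^ α := by
  set n := linf (z 0 - z m)
  set K := max (linf (z 0)) (linf (z m))
  have hsum : (n / 4 : ℝ) * (K / 2 : ℝ) ^ α ≤ ∑ i ∈ range m, (stepNorm z i : ℝ) ^ α := by
    rcases le_total (linf (z m)) (linf (z 0)) with h | h
    · simpa [K, max_eq_left h] using hz.le_sum_rpow_stepNorm_of_linf_le hα h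
    · have := hz.reverse.le_sum_rpow_stepNorm_of_linf_le hα (by simpa using h)
      rw [sum_stepNorm_reverse (· ^ α)] at this
      simpa [K, n, max_eq_right h, linf_sub_comm (z m)] using this
  have hMK : max (linf (z 0) : ℝ) n / 4 ≤ K / 2 := by
    have := linf_sub_le (z 0) (z m)
    rw [div_le_div_iff₀ four_pos two_pos]
    exact_mod_cast (by omega : max (linf (z 0)) n * 2 ≤ K * 4)
  calc (4 ^ (1 + α))⁻¹ * rhox α (z 0) n = (n / 4 : ℝ) * (max (linf (z 0) : ℝ) n / 4) ^ α := by
        rw [rhox, Real.rpow_add four_pos, Real.rpow_one, Real.div_rpow (by positivity) four_pos.le]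
        field_simp
    _ ≤ (n / 4 : ℝ) * (K / 2 : ℝ) ^ α := by gcongr
    _ ≤ _ := hsum

theorem sum_rpow_stepNorm_le_of_two_mul_le (hz : IsPath z m) (hα : α ≤ 0)
    (hfar : 2 * m ≤ linf (z 0)) :
    ∑ i ∈ range m, (stepNorm z i : ℝ) ^ α ≤ m * (linf (z 0) / 2 : ℝ) ^ α := by
  calc ∑ i ∈ range m, (stepNorm z i : ℝ) ^ α ≤ ∑ i ∈ range m, (linf (z 0) / 2 : ℝ) ^ α := by
        refine sum_le_sum fun i hi => Real.rpow_le_rpow_of_nonpos ?_ ?_ hα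
        all_goals rw [mem_range] at hi
        · have : 0 < linf (z 0) := by omega
          positivity
        · have := hz.linf_le_stepNorm_add hi
          rw [div_le_iff₀ two_pos]
          exact_mod_cast (by omega : linf (z 0) ≤ stepNorm z i * 2)
    _ = _ := by simp

theorem sum_rpow_stepNorm_le_rpow_length (hz : IsPath z m) (hgeo : l1 (z 0 - z m) = m)
    (hα : -1 < α) (hα0 : α ≤ 0) :
    ∑ i ∈ range m, (stepNorm z i : ℝ) ^ α ≤ 2 * (2 * d + 1) ^ (-α) / (1 + α) * m ^ (1 + α) := by
  obtain ⟨i₀, hi₀, hmin⟩ :=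
    exists_min_image (range (m + 1)) (fun i => linf (z i)) nonempty_range_add_one
  rw [mem_range] at hi₀
  have hpoint : ∀ i ∈ range m,
      (stepNorm z i : ℝ) ^ α ≤ (2 * d + 1) ^ (-α) * ((Nat.dist i i₀ : ℝ) + 1) ^ α := by
    intro i hi
    rw [mem_range] at hi
    have hdist : Nat.dist i i₀ ≤ 2 * (d * linf (z i)) := by
      rw [← hz.l1_sub_eq_dist hgeo hi.le (by omega)]
      have := l1_sub_le (z i) (z i₀)
      have := l1_le_mul_linf (z i)
      have := l1_le_mul_linf (z i₀)
      have := Nat.mul_le_mul_left d (hmin i (mem_range.2 (by omega)))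
      omega
    have hK : (Nat.dist i i₀ : ℝ) + 1 ≤ (2 * d + 1) * stepNorm z i := by
      have := hz.one_le_stepNorm hi
      have := Nat.mul_le_mul_left d (le_max_left (linf (z i)) (linf (z (i + 1))))
      have h : Nat.dist i i₀ + 1 ≤ (2 * d + 1) * stepNorm z i := by
        rw [add_mul, one_mul, mul_assoc]
        unfold stepNorm at *
        omega
      exact_mod_cast h
    calc (stepNorm z i : ℝ) ^ α ≤ (((Nat.dist i i₀ : ℝ) + 1) / (2 * d + 1)) ^ α :=
          Real.rpow_le_rpow_of_nonpos (by positivity)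
            (by rw [div_le_iff₀ (by positivity)]; linarith) hα0
      _ = (2 * d + 1) ^ (-α) * ((Nat.dist i i₀ : ℝ) + 1) ^ α := by
          rw [Real.div_rpow (by positivity) (by positivity), Real.rpow_neg (by positivity)]
          ring
  have hanti : Antitone fun k : ℕ => ((k : ℝ) + 1) ^ α := fun a b hab =>
    Real.rpow_le_rpow_of_nonpos (by positivity) (by exact_mod_cast Nat.add_le_add_right hab 1) hα0
  calc ∑ i ∈ range m, (stepNorm z i : ℝ) ^ α
      ≤ ∑ i ∈ range m, (2 * d + 1) ^ (-α) * ((Nat.dist i i₀ : ℝ) + 1) ^ α := sum_le_sum hpoint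
    _ = (2 * d + 1) ^ (-α) * ∑ i ∈ range m, ((Nat.dist i i₀ : ℝ) + 1) ^ α := by rw [mul_sum]
    _ ≤ (2 * d + 1) ^ (-α) * (2 * ∑ k ∈ range m, ((k : ℝ) + 1) ^ α) := by
        gcongr
        exact sum_range_dist_le hanti (fun k => by positivity) (by omega)
    _ ≤ (2 * d + 1) ^ (-α) * (2 * (m ^ (1 + α) / (1 + α))) := by
        gcongr
        exact sum_range_rpow_succ_le hα hα0 m
    _ = _ := by ring

theorem sum_rpow_stepNorm_le_of_nonpos (hz : IsPath z m) (hgeo : l1 (z 0 - z m) = m)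
    (hxy : z 0 ≠ z m) (hα : -1 < α) (hα0 : α ≤ 0) :
    ∑ i ∈ range m, (stepNorm z i : ℝ) ^ α ≤
      (1 + 2 * (2 * d + 1) ^ (-α) / (1 + α)) * d * 2 ^ (-α) * rhox α (z 0) (linf (z 0 - z m)) := by
  set n := linf (z 0 - z m)
  set M : ℝ := max (linf (z 0) : ℝ) n
  have hn : 1 ≤ n := linf_pos (sub_ne_zero.2 hxy)
  have hnm : n ≤ m := (linf_le_l1 _).trans hgeo.le
  have hmd : m ≤ d * n := hgeo.ge.trans (l1_le_mul_linf _)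
  have hM : 0 < M := lt_of_lt_of_le (by exact_mod_cast hn) (le_max_right _ _)
  have hρ : 0 ≤ d * 2 ^ (-α) * rhox α (z 0) n := by
    have := rhox_nonneg α (z 0) (Nat.cast_nonneg n)
    positivity
  have hC : 0 ≤ 2 * (2 * d + 1) ^ (-α) / (1 + α) := by
    have : 0 < 1 + α := by linarith
    positivity
  have hkey : (m : ℝ) * (M / 2) ^ α ≤ d * 2 ^ (-α) * rhox α (z 0) n := by
    rw [rhox, Real.div_rpow hM.le two_pos.le, Real.rpow_neg two_pos.le]
    calc (m : ℝ) * (M ^ α / 2 ^ α) ≤ (d * n) * (M ^ α / 2 ^ α) := by gcongr; exact_mod_cast hmd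
      _ = _ := by ring
  by_cases hfar : 2 * m ≤ linf (z 0)
  · have hMx : M = linf (z 0) := max_eq_left (by exact_mod_cast (by omega : n ≤ linf (z 0)))
    calc ∑ i ∈ range m, (stepNorm z i : ℝ) ^ α ≤ m * (M / 2) ^ α := by
          rw [hMx]; exact hz.sum_rpow_stepNorm_le_of_two_mul_le hα0 hfar
      _ ≤ d * 2 ^ (-α) * rhox α (z 0) n := hkey
      _ ≤ (1 + 2 * (2 * d + 1) ^ (-α) / (1 + α)) * (d * 2 ^ (-α) * rhox α (z 0) n) :=
          le_mul_of_one_le_left hρ (by linarith)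
      _ = _ := by ring
  · have hM2 : M / 2 ≤ m := by
      rw [div_le_iff₀ two_pos]
      exact max_le (by exact_mod_cast (by omega : linf (z 0) ≤ m * 2))
        (by exact_mod_cast (by omega : n ≤ m * 2))
    have hpow : (m : ℝ) ^ (1 + α) ≤ m * (M / 2) ^ α := by
      rw [Real.rpow_add (by exact_mod_cast (by omega : 0 < m)), Real.rpow_one]
      exact mul_le_mul_of_nonneg_left (Real.rpow_le_rpow_of_nonpos (by positivity) hM2 hα0)
        (Nat.cast_nonneg m)
    calc ∑ i ∈ range m, (stepNorm z i : ℝ) ^ α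
        ≤ 2 * (2 * d + 1) ^ (-α) / (1 + α) * m ^ (1 + α) :=
          hz.sum_rpow_stepNorm_le_rpow_length hgeo hα hα0
      _ ≤ 2 * (2 * d + 1) ^ (-α) / (1 + α) * (d * 2 ^ (-α) * rhox α (z 0) n) := by
          gcongr
          exact hpow.trans hkey
      _ ≤ (1 + 2 * (2 * d + 1) ^ (-α) / (1 + α)) * (d * 2 ^ (-α) * rhox α (z 0) n) := by
          gcongr
          linarith
      _ = _ := by ring

end IsPath

theorem geodesic_edge_resistance_general (d : ℕ) (α : ℝ) (hα : -1 < α) :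
    ∃ c₁ : ℝ, 0 < c₁ ∧ c₁ ≤ 1 ∧
      ∀ x y : Fin d → ℤ, x ≠ y →
        ∀ (m : ℕ) (z : ℕ → Fin d → ℤ), IsPath z m → z 0 = x → z m = y →
          m = l1 (x - y) →
          c₁ * rhox α x ((linf (x - y) : ℕ) : ℝ) ≤
              ∑ i ∈ Finset.range m, (mu α (z i) (z (i + 1)))⁻¹ ∧
            ∑ i ∈ Finset.range m, (mu α (z i) (z (i + 1)))⁻¹ ≤
              c₁⁻¹ * rhox α x ((linf (x - y) : ℕ) : ℝ) := by
  obtain ⟨A, B, hA, hAB⟩ : ∃ A B : ℝ, 0 < A ∧ ∀ (m : ℕ) (z : ℕ → Fin d → ℤ), IsPath z m →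
      z 0 ≠ z m → l1 (z 0 - z m) = m →
      A * rhox α (z 0) (linf (z 0 - z m)) ≤ ∑ i ∈ range m, (stepNorm z i : ℝ) ^ α ∧
        ∑ i ∈ range m, (stepNorm z i : ℝ) ^ α ≤ B * rhox α (z 0) (linf (z 0 - z m)) := by
    rcases le_total 0 α with hα0 | hα0
    · exact ⟨_, _, by positivity, fun m z hz _ hgeo =>
        ⟨hz.le_sum_rpow_stepNorm_of_nonneg hα0, hz.sum_rpow_stepNorm_le_of_nonneg hgeo hα0⟩⟩
    · exact ⟨_, _, by positivity, fun m z hz hxy hgeo =>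
        ⟨hz.le_sum_rpow_stepNorm_of_nonpos hgeo hα0,
          hz.sum_rpow_stepNorm_le_of_nonpos hgeo hxy hα hα0⟩⟩
  have hB : 0 < max B 1 := lt_max_of_lt_right one_pos
  refine ⟨min A (max B 1)⁻¹, by positivity,
    (min_le_right _ _).trans (inv_le_one_of_one_le₀ (le_max_right _ _)), ?_⟩
  rintro x y hxy m z hz rfl rfl hgeo
  rw [sum_congr rfl fun i hi => hz.inv_mu_eq α (mem_range.1 hi)]
  have hρ := rhox_nonneg α (z 0) (Nat.cast_nonneg (linf (z 0 - z m)))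
  obtain ⟨hlow, hup⟩ := hAB m z hz hxy hgeo.symm
  refine ⟨(mul_le_mul_of_nonneg_right (min_le_left _ _) hρ).trans hlow,
    hup.trans (mul_le_mul_of_nonneg_right ?_ hρ)⟩
  exact (le_max_left B 1).trans ((le_inv_comm₀ (by positivity) hB).1 (min_le_right _ _))

/-- There is `c₁ ∈ (0,1]`, depending only on `α` and `d`, such that
for all `x ≠ y` and every L¹-geodesic `z_0, …, z_m` from `x` to `y`,
`c₁ ρ_x(|x-y|) ≤ ∑_{i=0}^{m-1} μ_{z_i z_{i+1}}⁻¹ ≤ c₁⁻¹ ρ_x(|x-y|)`. -/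
theorem geodesic_edge_resistance (d : ℕ) (hd : 1 ≤ d) (α : ℝ) (hα : -1 < α) :
    ∃ c₁ : ℝ, 0 < c₁ ∧ c₁ ≤ 1 ∧
      ∀ x y : Fin d → ℤ, x ≠ y →
        ∀ (m : ℕ) (z : ℕ → Fin d → ℤ), IsPath z m → z 0 = x → z m = y →
          m = l1 (x - y) →
          c₁ * rhox α x ((linf (x - y) : ℕ) : ℝ) ≤
              ∑ i ∈ Finset.range m, (mu α (z i) (z (i + 1)))⁻¹ ∧
            ∑ i ∈ Finset.range m, (mu α (z i) (z (i + 1)))⁻¹ ≤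
              c₁⁻¹ * rhox α x ((linf (x - y) : ℕ) : ℝ) :=
  geodesic_edge_resistance_general d α hα
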